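/- arXiv:2101.02251 — 11 statements merged into one kernel-verified Lean document; each statement's English description precedes it below -/
import Mathlib

section
/- Let P > 0 be historical prices with chosen product c, p ≥ 0 new prices, and j ≠ c another product. The set W^j = { v ∈ ℝ^n_+ : v_c ≥ P_c, v_c - P_c ≥ v_k - P_k for all k, v_j ≥ p_j, and v_j - p_j ≥ v_k - p_k for all k } is nonempty if and only if p_j - p_c ≤ P_j - P_c. -/
/-!
Necessity: comparing utilities of `j` and `c` at both price vectors gives
`v j - P j ≤ v c - P c` and `v c - p c ≤ v j - p j`; add them.

Sufficiency: for surplus levels `a, b` the valuation `k ↦ min (a + P k) (b + p k)` never yields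
utility above `a` at prices `P` nor above `b` at prices `p`. With `b - a = P c - p c` the hypothesis
makes the minimum attained by the first term at `c` and by the second at `j`, so `c` and `j` are
utility-maximising; taking `a` large makes every coordinate and both utilities nonnegative.
-/

section Envelope

variable {ι : Type*} (P p : ι → ℝ) (a b : ℝ)

def envelope (k : ι) : ℝ := min (a + P k) (b + p k)

variable {P p a b}

lemma envelope_sub_left_le (k : ι) : envelope P p a b k - P k ≤ a := by
  simp only [envelope, sub_le_iff_le_add]
  linarith [min_le_left (a + P k) (b + p k)]

lemma envelope_sub_right_le (k : ι) : envelope P p a b k - p k ≤ b := by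
  simp only [envelope, sub_le_iff_le_add]
  linarith [min_le_right (a + P k) (b + p k)]

lemma envelope_of_left_le {k : ι} (h : a + P k ≤ b + p k) : envelope P p a b k = a + P k :=
  min_eq_left h

lemma envelope_of_right_le {k : ι} (h : b + p k ≤ a + P k) : envelope P p a b k = b + p k :=
  min_eq_right h

lemma envelope_nonneg (ha : ∀ k, -P k ≤ a) (hb : ∀ k, -p k ≤ b) (k : ι) :
    0 ≤ envelope P p a b k :=
  le_min (by linarith [ha k]) (by linarith [hb k])

end Envelope

lemma exists_nonneg_forall_neg_le {ι : Type*} [Finite ι] (P p : ι → ℝ) :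
    ∃ M, 0 ≤ M ∧ ∀ k, -P k ≤ M ∧ -p k ≤ M := by
  obtain ⟨M, hM⟩ := Finite.exists_le fun k => max (-P k) (-p k)
  exact ⟨max M 0, le_max_right _ _, fun k =>
    ⟨(le_max_left _ _).trans ((hM k).trans (le_max_left _ _)),
     (le_max_right _ _).trans ((hM k).trans (le_max_left _ _))⟩⟩

theorem stmt_2_general (n : ℕ) (P p : Fin n → ℝ) (c j : Fin n) :
    (∃ v : Fin n → ℝ, (∀ k, 0 ≤ v k) ∧ P c ≤ v c ∧
      (∀ k, v k - P k ≤ v c - P c) ∧ p j ≤ v j ∧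
      (∀ k, v k - p k ≤ v j - p j)) ↔ p j - p c ≤ P j - P c := by
  constructor
  · rintro ⟨v, -, -, hcP, -, hjp⟩
    linarith [hcP j, hjp c]
  · intro h
    obtain ⟨M, hM0, hM⟩ := exists_nonneg_forall_neg_le P p
    set a := M + |P c - p c|
    set b := a + (P c - p c)
    have ha : M ≤ a := le_add_of_nonneg_right (abs_nonneg _)
    have hb : M ≤ b := by linarith [neg_abs_le (P c - p c)]
    have hc : envelope P p a b c = a + P c := envelope_of_left_le (by linarith)
    have hj : envelope P p a b j = b + p j := envelope_of_right_le (by linarith)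
    refine ⟨envelope P p a b,
      envelope_nonneg (fun k => (hM k).1.trans ha) (fun k => (hM k).2.trans hb),
      ?_, fun k => ?_, ?_, fun k => ?_⟩
    · linarith
    · rw [hc, add_sub_cancel_right]
      exact envelope_sub_left_le k
    · linarith
    · rw [hj, add_sub_cancel_right]
      exact envelope_sub_right_le k

/-- For `j ≠ c`, the set W^j (valuations in the IC polyhedron of
`(P, c)` incentive-compatible with purchasing `j` under new prices `p ≥ 0`) is
nonempty if and only if `p j - p c ≤ P j - P c`. -/
theorem stmt_2 (n : ℕ) (P p : Fin n → ℝ) (c j : Fin n) (hjc : j ≠ c)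
    (hP : ∀ k, 0 < P k) (hp : ∀ k, 0 ≤ p k) :
    (∃ v : Fin n → ℝ, (∀ k, 0 ≤ v k) ∧ P c ≤ v c ∧
      (∀ k, v k - P k ≤ v c - P c) ∧ p j ≤ v j ∧
      (∀ k, v k - p k ≤ v j - p j)) ↔ p j - p c ≤ P j - P c :=
  stmt_2_general n P p c j
end

section
/- Suppose every customer i ∈ {1,...,m} observed the same historical price P_i for all products and prices are sorted so that P_1 ≤ P_2 ≤ ... ≤ P_m. Then setting all new product prices equal to P_{i*}, where i* maximizes (m - i + 1)·P_i over i ∈ {1,...,m}, maximizes the total worst-case revenue ∑_i f_i(p) over all price vectors p ≥ 0, and the optimal total revenue equals max_i (m - i + 1)·P_i. -/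
/-- The worst-case revenue in the attained-supremum (relaxed, `ε = 0`) sense:
the customer purchases iff `p c ≤ P c`, and in the worst case she picks the
cheapest product among her historical choice `c` and products that are strictly
incentive-compatible under the new prices (`p j - p c < P j - P c`). -/
noncomputable def grev {n : ℕ} (P p : Fin n → ℝ) (c : Fin n) : ℝ :=
  if p c ≤ P c then
    (Finset.univ.filter fun j => j = c ∨ p j - p c < P j - P c).inf' ⟨c, by simp⟩ p
  else 0

/-!
When every historical price of customer `i` equals `P i`, the IC condition `p j - p c < 0` lets
her fall back on any product cheaper than her choice, so she pays the overall minimum price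
`t = min p` whenever she buys at all, i.e. whenever `t ≤ p c ≤ P i`. Hence the total revenue is at
most `t · #{i | t ≤ P i}`; if `i₀` is the first customer with `t ≤ P i₀`, this is at most
`(m - i₀) · P i₀`, which the choice of `i*` bounds by `(m - i*) · P i*`. The constant price vector
`P i*` sells to every customer `i ≥ i*` by monotonicity, so it attains this bound.
-/

open Finset

lemma grev_const_hist {n : ℕ} (A : ℝ) (p : Fin n → ℝ) (c : Fin n) :
    grev (fun _ => A) p c = if p c ≤ A then univ.inf' (univ_nonempty_iff.mpr ⟨c⟩) p else 0 := by
  unfold grev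
  split_ifs with hbuy
  · refine le_antisymm ?_ (inf'_mono p (subset_univ _) _)
    obtain ⟨j₀, -, hj₀⟩ := exists_mem_eq_inf' (univ_nonempty_iff.mpr ⟨c⟩) p
    rw [hj₀]
    rcases lt_or_ge (p j₀) (p c) with hlt | hge
    · exact inf'_le _ (by simp [hlt])
    · have hc : p c = p j₀ := le_antisymm hge (hj₀ ▸ inf'_le p (mem_univ c))
      exact hc ▸ inf'_le _ (by simp)
  · rfl

lemma sum_grev_const_hist_le {m n : ℕ} (P : Fin m → ℝ) (c : Fin m → Fin n) (p : Fin n → ℝ)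
    (hn : (univ : Finset (Fin n)).Nonempty) (ht : 0 ≤ univ.inf' hn p) :
    ∑ i, grev (fun _ => P i) p (c i) ≤ #{i | univ.inf' hn p ≤ P i} * univ.inf' hn p := by
  rw [← nsmul_eq_mul, ← sum_const, sum_filter]
  refine sum_le_sum fun i _ => ?_
  rw [grev_const_hist]
  split_ifs with hbuy hle hle
  · rfl
  · exact absurd ((inf'_le _ (mem_univ (c i))).trans hbuy) hle
  · exact ht
  · rfl

lemma sum_grev_const_hist_const {m n : ℕ} (P : Fin m → ℝ) (c : Fin m → Fin n) (q : ℝ) :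
    ∑ i, grev (fun _ => P i) (fun _ => q) (c i) = #{i | q ≤ P i} * q := by
  rw [← nsmul_eq_mul, ← sum_const, sum_filter]
  simp only [grev_const_hist, inf'_const]

lemma card_filter_le_mul_le {m : ℕ} (a : Fin m → ℝ) {t M : ℝ} (ht : 0 ≤ t) (hM : 0 ≤ M)
    (h : ∀ i : Fin m, ((m - i.1 : ℕ) : ℝ) * a i ≤ M) :
    (#{i | t ≤ a i} : ℝ) * t ≤ M := by
  set S : Finset (Fin m) := {i | t ≤ a i}
  rcases S.eq_empty_or_nonempty with hS | hS
  · simpa [hS] using hM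
  have hmin : t ≤ a (S.min' hS) := (mem_filter.mp (S.min'_mem hS)).2
  have hcard : #S ≤ m - (S.min' hS).1 :=
    Fin.card_Ici (S.min' hS) ▸ card_le_card fun i hi => mem_Ici.mpr (S.min'_le i hi)
  calc (#S : ℝ) * t ≤ ((m - (S.min' hS).1 : ℕ) : ℝ) * a (S.min' hS) :=
        mul_le_mul (by exact_mod_cast hcard) hmin ht (Nat.cast_nonneg _)
    _ ≤ M := h _

/-- If every customer `i` observed the same historical price `Pc i`
for all products, with prices sorted nondecreasingly, then setting all new
prices to `Pc istar`, where `istar` maximizes `(m - i + 1) * Pc i`, maximizes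
the total worst-case revenue over nonnegative price vectors, and the optimum
equals `(m - istar + 1) * Pc istar` (written 0-based as `m - istar.1`). -/
theorem stmt_4 (m n : ℕ) (Pc : Fin m → ℝ) (c : Fin m → Fin n)
    (hpos : ∀ i, 0 < Pc i) (hmono : Monotone Pc)
    (istar : Fin m)
    (hstar : ∀ i : Fin m,
      ((m - i.1 : ℕ) : ℝ) * Pc i ≤ ((m - istar.1 : ℕ) : ℝ) * Pc istar) :
    (∀ p : Fin n → ℝ, (∀ j, 0 ≤ p j) →
      ∑ i, grev (fun _ => Pc i) p (c i) ≤
        ∑ i, grev (fun _ => Pc i) (fun _ => Pc istar) (c i)) ∧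
    ∑ i, grev (fun _ => Pc i) (fun _ => Pc istar) (c i)
      = ((m - istar.1 : ℕ) : ℝ) * Pc istar := by
  have hopt : 0 ≤ ((m - istar.1 : ℕ) : ℝ) * Pc istar :=
    mul_nonneg (Nat.cast_nonneg _) (hpos istar).le
  have hbest : ∑ i, grev (fun _ => Pc i) (fun _ => Pc istar) (c i)
      = ((m - istar.1 : ℕ) : ℝ) * Pc istar := by
    rw [sum_grev_const_hist_const]
    refine le_antisymm (card_filter_le_mul_le Pc (hpos istar).le hopt hstar) ?_
    have hsold : Ici istar ⊆ ({i | Pc istar ≤ Pc i} : Finset (Fin m)) := fun i hi =>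
      mem_filter.mpr ⟨mem_univ i, hmono (mem_Ici.mp hi)⟩
    have hcard : m - istar.1 ≤ #{i | Pc istar ≤ Pc i} := Fin.card_Ici istar ▸ card_le_card hsold
    gcongr
    exact (hpos istar).le
  refine ⟨fun p hp => ?_, hbest⟩
  have hn : (univ : Finset (Fin n)).Nonempty := ⟨c istar, mem_univ _⟩
  have ht : 0 ≤ univ.inf' hn p := le_inf' hn p fun j _ => hp j
  rw [hbest]
  exact (sum_grev_const_hist_le Pc c p hn ht).trans (card_filter_le_mul_le Pc ht hopt hstar)
end

section
/- Suppose every customer observed the same historical price vector, i.e., P_{ij} = P_j for all customers i and products j. Then setting new prices p_j = P_j - ε for any arbitrarily small ε > 0 (in the supremum formulation, p = P) attains the supremum of the total worst-case revenue, which equals ∑_{i=1}^m P_{c_i}, where c_i is customer i's historical choice. -/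
/-! At `p = P` the strict incentive-compatibility condition `P j - P c < P j - P c` never
holds, so every customer buys her own product at its old price. Conversely a customer buys
only when `p c ≤ P c`, and then pays at most `p c`, so she never pays more than `P c`. -/

section

variable {n : ℕ} (P p : Fin n → ℝ) (c : Fin n)

theorem grev_self : grev P P c = P c := by
  rw [grev, if_pos le_rfl]
  refine le_antisymm (Finset.inf'_le _ (by simp)) (Finset.le_inf' _ _ fun j hj => ?_)
  obtain rfl : j = c := by simpa using hj
  exact le_rfl

theorem grev_le (hP : 0 ≤ P c) : grev P p c ≤ P c := by
  rw [grev]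
  split_ifs with hbuy
  · exact (Finset.inf'_le _ (by simp)).trans hbuy
  · exact hP

end

/-- If every customer observed the same historical price vector
`Pv`, then setting the new prices equal to `Pv` attains the supremum of the
total worst-case revenue, which equals `∑ i, Pv (c i)`. -/
theorem stmt_5 (m n : ℕ) (Pv : Fin n → ℝ) (c : Fin m → Fin n)
    (hpos : ∀ j, 0 < Pv j) :
    ∑ i, grev Pv Pv (c i) = ∑ i, Pv (c i) ∧
    ∀ p : Fin n → ℝ, (∀ j, 0 ≤ p j) →
      ∑ i, grev Pv p (c i) ≤ ∑ i, Pv (c i) :=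
  ⟨Finset.sum_congr rfl fun i _ => grev_self Pv (c i),
    fun p _ => Finset.sum_le_sum fun i _ => grev_le Pv p (c i) (hpos (c i)).le⟩
end

section
/- Conservative pricing, which sets each product's price to the minimum historical price at which it was purchased, yields total worst-case revenue at least m·P̲, where P̲ = min_i P_{i c_i}. Consequently its revenue is at least the fraction P̲/P̄ of the optimal worst-case revenue, where P̄ = max_i P_{i c_i}. -/
section Grev

variable {n : ℕ} {P p : Fin n → ℝ} {c : Fin n}

theorem grev_le_self (hc : 0 ≤ P c) : grev P p c ≤ P c := by
  unfold grev
  split_ifs with h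
  · exact (Finset.inf'_le p (by simp)).trans h
  · exact hc

theorem le_grev {a : ℝ} (hc : p c ≤ P c) (ha : ∀ j, a ≤ p j) : a ≤ grev P p c := by
  rw [grev, if_pos hc]
  exact Finset.le_inf' _ _ fun j _ => ha j

end Grev

theorem sum_grev_le_sum {ι : Type*} [Fintype ι] {n : ℕ} (P : ι → Fin n → ℝ) (c : ι → Fin n)
    (p : Fin n → ℝ) (hP : ∀ i, 0 ≤ P i (c i)) :
    ∑ i, grev (P i) p (c i) ≤ ∑ i, P i (c i) :=
  Finset.sum_le_sum fun i _ => grev_le_self (hP i)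

section ConservativePrice

variable {ι α : Type*} [Fintype ι] [DecidableEq α]

noncomputable def conservativePrice (P : ι → α → ℝ) (c : ι → α) (d : ℝ) (j : α) : ℝ :=
  if h : (Finset.univ.filter fun i => c i = j).Nonempty then
    (Finset.univ.filter fun i => c i = j).inf' h fun i => P i j
  else d

theorem conservativePrice_le (P : ι → α → ℝ) (c : ι → α) (d : ℝ) (i : ι) :
    conservativePrice P c d (c i) ≤ P i (c i) := by
  have hi : i ∈ Finset.univ.filter fun k => c k = c i := by simp
  rw [conservativePrice, dif_pos ⟨i, hi⟩]
  exact Finset.inf'_le _ hi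

theorem le_conservativePrice {P : ι → α → ℝ} {c : ι → α} {a d : ℝ}
    (ha : ∀ i, a ≤ P i (c i)) (hd : a ≤ d) (j : α) : a ≤ conservativePrice P c d j := by
  unfold conservativePrice
  split_ifs
  · refine Finset.le_inf' _ _ fun i hi => ?_
    obtain rfl := (Finset.mem_filter.mp hi).2
    exact ha i
  · exact hd

theorem card_mul_le_sum_grev_conservativePrice {n : ℕ} (P : ι → Fin n → ℝ) (c : ι → Fin n)
    {a d : ℝ} (ha : ∀ i, a ≤ P i (c i)) (hd : a ≤ d) :
    Fintype.card ι * a ≤ ∑ i, grev (P i) (conservativePrice P c d) (c i) :=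
  calc (Fintype.card ι : ℝ) * a = ∑ _i : ι, a := by simp
    _ ≤ _ := Finset.sum_le_sum fun i _ =>
      le_grev (conservativePrice_le P c d i) (le_conservativePrice ha hd)

end ConservativePrice

/-- Conservative pricing (each product priced at the minimum
historical price at which it was purchased) yields total worst-case revenue at
least `m * Pmin`, hence at least the fraction `Pmin / Pmax` of the optimal
worst-case revenue, where `Pmin` / `Pmax` are the minimum / maximum historical
purchase prices. -/
theorem stmt_6 (m n : ℕ) [NeZero m]
    (P : Fin m → Fin n → ℝ) (c : Fin m → Fin n)
    (hP : ∀ i j, 0 < P i j) :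
    let Pmin := Finset.univ.inf' Finset.univ_nonempty fun i => P i (c i)
    let Pmax := Finset.univ.sup' Finset.univ_nonempty fun i => P i (c i)
    let pcons : Fin n → ℝ := fun j =>
      if h : (Finset.univ.filter fun i => c i = j).Nonempty then
        (Finset.univ.filter fun i => c i = j).inf' h fun i => P i j
      else Pmax
    ((m : ℝ) * Pmin ≤ ∑ i, grev (P i) pcons (c i)) ∧
    ∀ p : Fin n → ℝ, (∀ j, 0 ≤ p j) →
      (Pmin / Pmax) * ∑ i, grev (P i) p (c i) ≤ ∑ i, grev (P i) pcons (c i) := by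
  intro Pmin Pmax pcons
  have hPmin : ∀ i, Pmin ≤ P i (c i) := fun i => Finset.inf'_le _ (Finset.mem_univ i)
  have hPmax : ∀ i, P i (c i) ≤ Pmax := fun i =>
    Finset.le_sup' (fun i => P i (c i)) (Finset.mem_univ i)
  have hPmin_pos : 0 < Pmin := (Finset.lt_inf'_iff _).2 fun i _ => hP i (c i)
  have hPmin_le_Pmax : Pmin ≤ Pmax := (hPmin 0).trans (hPmax 0)
  have conservative : (m : ℝ) * Pmin ≤ ∑ i, grev (P i) pcons (c i) := by
    have h := card_mul_le_sum_grev_conservativePrice P c hPmin hPmin_le_Pmax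
    rwa [Fintype.card_fin] at h
  refine ⟨conservative, fun p _ => ?_⟩
  have optimal : ∑ i, grev (P i) p (c i) ≤ m * Pmax :=
    calc ∑ i, grev (P i) p (c i) ≤ ∑ i, P i (c i) :=
          sum_grev_le_sum P c p fun i => (hP i (c i)).le
      _ ≤ m * Pmax := by
          simpa using Finset.sum_le_card_nsmul Finset.univ _ _ fun i _ => hPmax i
  have hPmax_pos : 0 < Pmax := hPmin_pos.trans_le hPmin_le_Pmax
  calc Pmin / Pmax * ∑ i, grev (P i) p (c i) ≤ Pmin / Pmax * (m * Pmax) := by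
        gcongr
    _ = m * Pmin := by field_simp
    _ ≤ ∑ i, grev (P i) pcons (c i) := conservative
end

section
/- The ratio P̲/P̄ for conservative pricing is asymptotically tight: for one product and m customers where customer 1 purchased at price P_1 and customers 2,...,m purchased at price P_2 > P_1, conservative pricing yields revenue m·P_1 while the optimal price P_2 yields revenue (m-1)·P_2, so the ratio m·P_1/((m-1)·P_2) converges to P_1/P_2 as m → ∞. -/
open Filter Topology

theorem Fin.sum_ite_val_eq_zero {M : Type*} [AddCommMonoid M] {m : ℕ} (hm : 1 ≤ m) (a b : M) :
    ∑ i : Fin m, (if i.1 = 0 then a else b) = a + (m - 1) • b := by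
  obtain ⟨n, rfl⟩ := Nat.exists_eq_add_of_le' hm
  simp [Fin.sum_univ_succ]

theorem sum_ite_le_ite_val_eq_zero {m : ℕ} (hm : 1 ≤ m) (p a b : ℝ) :
    (∑ i : Fin m, if p ≤ (if i.1 = 0 then a else b) then p else 0)
      = (if p ≤ a then p else 0) + ((m : ℝ) - 1) * (if p ≤ b then p else 0) := by
  simp_rw [apply_ite (fun x => if p ≤ x then p else 0)]
  rw [Fin.sum_ite_val_eq_zero hm, nsmul_eq_mul, Nat.cast_sub hm, Nat.cast_one]

theorem tendsto_natCast_mul_div_natCast_sub_one_mul (a b : ℝ) :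
    Tendsto (fun m : ℕ => ((m : ℝ) * a) / (((m : ℝ) - 1) * b)) atTop (𝓝 (a / b)) := by
  have h := (tendsto_natCast_div_add_atTop (-1 : ℝ)).mul_const (a / b)
  rw [one_mul] at h
  refine h.congr fun m => ?_
  rw [div_mul_div_comm, ← sub_eq_add_neg]

theorem stmt_7_general (P1 P2 : ℝ) (h12 : P1 < P2) :
    (∀ m : ℕ, 1 ≤ m →
      (∑ i : Fin m, if P1 ≤ (if i.1 = 0 then P1 else P2) then P1 else 0)
        = (m : ℝ) * P1 ∧
      (∑ i : Fin m, if P2 ≤ (if i.1 = 0 then P1 else P2) then P2 else 0)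
        = ((m : ℝ) - 1) * P2) ∧
    Filter.Tendsto (fun m : ℕ => ((m : ℝ) * P1) / (((m : ℝ) - 1) * P2))
      Filter.atTop (nhds (P1 / P2)) := by
  refine ⟨fun m hm => ⟨?_, ?_⟩, tendsto_natCast_mul_div_natCast_sub_one_mul P1 P2⟩
  · rw [sum_ite_le_ite_val_eq_zero hm, if_pos le_rfl, if_pos h12.le]
    ring
  · rw [sum_ite_le_ite_val_eq_zero hm, if_neg (not_le.mpr h12), if_pos le_rfl, zero_add]

/-- Asymptotic tightness of the ratio `P1/P2` for conservative
pricing: one product, `m` customers, customer 1 purchased at price `P1`,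
customers `2, …, m` at price `P2 > P1`. Conservative pricing (price `P1`)
yields revenue `m * P1`; the optimal price `P2` yields `(m - 1) * P2`; the
ratio `m * P1 / ((m - 1) * P2)` converges to `P1 / P2` as `m → ∞`. -/
theorem stmt_7 (P1 P2 : ℝ) (h1 : 0 < P1) (h12 : P1 < P2) :
    (∀ m : ℕ, 1 ≤ m →
      (∑ i : Fin m, if P1 ≤ (if i.1 = 0 then P1 else P2) then P1 else 0)
        = (m : ℝ) * P1 ∧
      (∑ i : Fin m, if P2 ≤ (if i.1 = 0 then P1 else P2) then P2 else 0)
        = ((m : ℝ) - 1) * P2) ∧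
    Filter.Tendsto (fun m : ℕ => ((m : ℝ) * P1) / (((m : ℝ) - 1) * P2))
      Filter.atTop (nhds (P1 / P2)) :=
  stmt_7_general P1 P2 h12
end

section
/- Let X be a random variable uniformly distributed on a finite multiset of positive values {q_1,...,q_m} with minimum P̲ and maximum P̄, and let R = max_i (1 - F(q_i))·q_i where F(x) = P(X < x). Then E[X] ≤ R·(1 + log(P̄/P̲)); equivalently R/E[X] ≥ 1/(1 + log(P̄/P̲)). -/
/-!
Peel off the smallest value `b` of a set `s` of values: every element of `s` is at least `b`, so
`#s * b ≤ R` whenever `R` bounds every `#{j | q i ≤ q j} * q i`, and lowering the lower bound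
from `b` to `a` costs `#s * (b - a) ≤ R * (1 - a / b) ≤ R * log (b / a)`. These costs telescope
to `∑ q ≤ m * Pmin + R * log (Pmax / Pmin)`, and `Pmin ≤ R / m` since all `m` values are at
least `Pmin`.
-/

open Finset Real

lemma mul_sub_le_mul_log_div {a b c R : ℝ} (ha : 0 < a) (hab : a ≤ b) (hc : 0 ≤ c)
    (hcb : c * b ≤ R) : c * (b - a) ≤ R * log (b / a) := by
  have hb : 0 < b := ha.trans_le hab
  have hfrac : 0 ≤ 1 - a / b := sub_nonneg.2 ((div_le_one hb).2 hab)
  calc c * (b - a) = c * b * (1 - a / b) := by field_simp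
    _ ≤ R * (1 - a / b) := mul_le_mul_of_nonneg_right hcb hfrac
    _ ≤ R * log (b / a) := by
      refine mul_le_mul_of_nonneg_left ?_ ((mul_nonneg hc hb.le).trans hcb)
      simpa [inv_div] using one_sub_inv_le_log_of_pos (div_pos hb ha)

lemma sum_le_card_mul_add_mul_log_div {ι : Type*} [DecidableEq ι] (q : ι → ℝ)
    (s : Finset ι) {a P R : ℝ} (ha : 0 < a) (haP : a ≤ P) (hR : 0 ≤ R)
    (hlow : ∀ i ∈ s, a ≤ q i) (hup : ∀ i ∈ s, q i ≤ P)
    (hcount : ∀ i ∈ s, #{j ∈ s | q i ≤ q j} * q i ≤ R) :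
    ∑ i ∈ s, q i ≤ #s * a + R * log (P / a) := by
  induction s using Finset.induction_on_min_value q generalizing a with
  | empty => simpa using mul_nonneg hR (log_nonneg ((one_le_div ha).2 haP))
  | insert b s hbs hmin ih =>
    have hab : a ≤ q b := hlow b (mem_insert_self b s)
    have hb : 0 < q b := ha.trans_le hab
    have htail : ∑ i ∈ s, q i ≤ #s * q b + R * log (P / q b) := by
      refine ih hb (hup b (mem_insert_self b s)) hmin
        (fun i hi => hup i (mem_insert_of_mem hi)) fun i hi => ?_
      refine le_trans ?_ (hcount i (mem_insert_of_mem hi))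
      have : 0 ≤ q i := hb.le.trans (hmin i hi)
      gcongr
      exact subset_insert b s
    have hfull : (#(insert b s) : ℝ) * q b ≤ R := by
      have h := hcount b (mem_insert_self b s)
      rwa [filter_true_of_mem fun j hj => ?_] at h
      rcases mem_insert.1 hj with rfl | hj
      exacts [le_rfl, hmin j hj]
    have hstep := mul_sub_le_mul_log_div ha hab (Nat.cast_nonneg _) hfull
    have hlog : log (P / a) = log (P / q b) + log (q b / a) := by
      rw [← log_mul (div_pos (ha.trans_le haP) hb).ne' (div_pos hb ha).ne',
        div_mul_div_cancel₀ hb.ne']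
    rw [card_insert_of_notMem hbs, Nat.cast_succ] at hstep ⊢
    rw [sum_insert hbs, hlog]
    linarith

/-- For `X` uniformly distributed on the positive values
`q 1, …, q m` with minimum `Pmin` and maximum `Pmax`, and
`R = max_i (1 - F(q i)) * q i` where `F(x) = P(X < x)` (so
`1 - F(q i) = #{{j : q j ≥ q i}} / m`), one has
`E[X] ≤ R * (1 + log (Pmax / Pmin))`. -/
theorem stmt_8 (m : ℕ) [NeZero m] (q : Fin m → ℝ) (hq : ∀ i, 0 < q i) :
    let Pmin := Finset.univ.inf' Finset.univ_nonempty q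
    let Pmax := Finset.univ.sup' Finset.univ_nonempty q
    let R := Finset.univ.sup' Finset.univ_nonempty fun i =>
      ((Finset.univ.filter fun j => q i ≤ q j).card : ℝ) / m * q i
    (∑ i, q i) / m ≤ R * (1 + Real.log (Pmax / Pmin)) := by
  intro Pmin Pmax R
  have hm : (0 : ℝ) < m := by exact_mod_cast Nat.pos_of_ne_zero (NeZero.ne m)
  have hRi (i : Fin m) : (#{j | q i ≤ q j} : ℝ) * q i ≤ m * R := by
    rw [← div_le_iff₀' hm, mul_div_right_comm]
    exact le_sup' (fun i => (#{j | q i ≤ q j} : ℝ) / m * q i) (mem_univ i)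
  obtain ⟨i₀, -, hi₀⟩ := exists_mem_eq_inf' univ_nonempty q
  have hPmin : 0 < Pmin := (lt_inf'_iff _).2 fun i _ => hq i
  have hPminR : Pmin ≤ R := by
    have h := hRi i₀
    rw [← hi₀, filter_true_of_mem fun j _ => inf'_le q (mem_univ j), card_univ,
      Fintype.card_fin] at h
    exact le_of_mul_le_mul_left h hm
  have hsum := sum_le_card_mul_add_mul_log_div q univ hPmin
    ((inf'_le q (mem_univ i₀)).trans (le_sup' q (mem_univ i₀)))
    (mul_nonneg hm.le (hPmin.le.trans hPminR)) (fun i _ => inf'_le q (mem_univ i))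
    (fun i _ => le_sup' q (mem_univ i)) fun i _ => hRi i
  rw [card_univ, Fintype.card_fin] at hsum
  rw [div_le_iff₀ hm]
  linarith [mul_le_mul_of_nonneg_left hPminR hm.le]
end

section
/- Pricing at the average historical price can be arbitrarily bad: with one product and m customers, where m-1 customers purchased at price 1 and one customer purchased at price 2, the average price (m+1)/m yields worst-case revenue (m+1)/m while pricing at 1 yields revenue m; hence the revenue ratio (m+1)/m² tends to 0 as m → ∞. -/
theorem Fin.sum_ite_val_eq_sub_one {M : Type*} [AddCommMonoid M] {m : ℕ} (hm : 1 ≤ m)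
    (a b : M) : ∑ i : Fin m, (if i.1 = m - 1 then a else b) = a + (m - 1) • b := by
  obtain ⟨n, rfl⟩ : ∃ n, m = n + 1 := ⟨m - 1, by omega⟩
  rw [Fin.sum_univ_castSucc]
  simp [Fin.val_castSucc, add_comm, fun x : Fin n => x.isLt.ne]

theorem tendsto_natCast_add_one_div_sq_atTop :
    Filter.Tendsto (fun m : ℕ => ((m : ℝ) + 1) / (m : ℝ) ^ 2) Filter.atTop (nhds 0) := by
  have h := tendsto_one_div_atTop_nhds_zero_nat (𝕜 := ℝ)
  have split : (fun m : ℕ => ((m : ℝ) + 1) / (m : ℝ) ^ 2)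
      = fun m : ℕ => 1 / (m : ℝ) + (1 / (m : ℝ)) ^ 2 := by
    funext m
    rcases eq_or_ne (m : ℝ) 0 with hm | hm
    · simp [hm]
    · field_simp
  rw [split]
  simpa using h.add (h.pow 2)

/-- Average-price heuristic can be arbitrarily bad: one product,
`m` customers of which `m - 1` purchased at price `1` and one at price `2`.
The average price is `(m + 1)/m`; at that price only the price-2 customer
buys, for worst-case revenue `(m + 1)/m`, while price `1` earns `m`. The
ratio `(m + 1)/m²` tends to `0`. -/
theorem stmt_12 :
    (∀ m : ℕ, 2 ≤ m →
      (∑ i : Fin m, (if i.1 = m - 1 then (2 : ℝ) else 1)) / m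
        = ((m : ℝ) + 1) / m ∧
      (∑ i : Fin m, if ((m : ℝ) + 1) / m ≤ (if i.1 = m - 1 then (2 : ℝ) else 1)
          then ((m : ℝ) + 1) / m else 0) = ((m : ℝ) + 1) / m ∧
      (∑ i : Fin m, if (1 : ℝ) ≤ (if i.1 = m - 1 then (2 : ℝ) else 1)
          then (1 : ℝ) else 0) = (m : ℝ)) ∧
    Filter.Tendsto (fun m : ℕ => ((m : ℝ) + 1) / (m : ℝ) ^ 2)
      Filter.atTop (nhds 0) := by
  refine ⟨fun m hm => ⟨?_, ?_, ?_⟩, tendsto_natCast_add_one_div_sq_atTop⟩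
  · rw [Fin.sum_ite_val_eq_sub_one (by omega)]
    simp only [nsmul_eq_mul, Nat.cast_sub (by omega : 1 ≤ m), Nat.cast_one, mul_one]
    ring
  · -- The average price lies in (1, 2], so only the customer who paid 2 still buys.
    set p := ((m : ℝ) + 1) / m
    have hm2 : (2 : ℝ) ≤ m := by exact_mod_cast hm
    have hp1 : 1 < p := by rw [lt_div_iff₀ (by linarith)]; linarith
    have hp2 : p ≤ 2 := by rw [div_le_iff₀ (by linarith)]; linarith
    calc ∑ i : Fin m, (if p ≤ (if i.1 = m - 1 then (2 : ℝ) else 1) then p else 0)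
        = ∑ i : Fin m, if i.1 = m - 1 then p else 0 :=
          Finset.sum_congr rfl fun i _ => by split_ifs <;> first | rfl | linarith
      _ = p := by simp [Fin.sum_ite_val_eq_sub_one (by omega : 1 ≤ m)]
  · calc ∑ i : Fin m, (if (1 : ℝ) ≤ (if i.1 = m - 1 then (2 : ℝ) else 1) then (1 : ℝ) else 0)
        = ∑ _i : Fin m, (1 : ℝ) :=
          Finset.sum_congr rfl fun i _ => by split_ifs <;> first | rfl | norm_num at *
      _ = m := by simp
end

section
/- Pricing according to a uniformly random historical customer's observed prices can be arbitrarily bad: in the instance with n products and n customers where customer i observed price 1 for product i and price 2 for all other products and purchased product i, each of the n candidate price vectors yields total worst-case revenue exactly 1, while the vector of all-ones prices yields revenue n; hence the expected-revenue ratio is at most 1/n → 0. -/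
theorem grev_eq_zero_of_lt {n : ℕ} {P p : Fin n → ℝ} {c : Fin n} (h : P c < p c) :
    grev P p c = 0 :=
  if_neg h.not_ge

theorem grev_eq_of_le_of_forall_le {n : ℕ} {P p : Fin n → ℝ} {c : Fin n} (hc : p c ≤ P c)
    (hmin : ∀ j, p c ≤ p j) : grev P p c = p c := by
  rw [grev, if_pos hc]
  exact le_antisymm (Finset.inf'_le _ (by simp)) (Finset.le_inf' _ _ fun j _ => hmin j)

theorem stmt_13_general (n : ℕ) :
    (∀ k : Fin n, ∑ i,
        grev (fun j => if i = j then (1 : ℝ) else 2)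
          (fun j => if k = j then (1 : ℝ) else 2) i = 1) ∧
    (∑ i : Fin n,
        grev (fun j => if i = j then (1 : ℝ) else 2) (fun _ => (1 : ℝ)) i
      = (n : ℝ)) ∧
    Filter.Tendsto (fun n : ℕ => 1 / (n : ℝ)) Filter.atTop (nhds 0) := by
  refine ⟨fun k => ?_, ?_, tendsto_one_div_atTop_nhds_zero_nat⟩
  · have other_zero : ∀ i, i ≠ k → grev (fun j => if i = j then (1 : ℝ) else 2)
        (fun j => if k = j then (1 : ℝ) else 2) i = 0 := fun i hik =>
      grev_eq_zero_of_lt (by simp [Ne.symm hik])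
    rw [Finset.sum_eq_single k (fun i _ => other_zero i) (by simp),
      grev_eq_of_le_of_forall_le (by simp) fun j => by split_ifs <;> simp_all]
    simp
  · simp [grev_eq_of_le_of_forall_le]

/-- Random-historical-price heuristic can be arbitrarily bad: with
`n` products and `n` customers where customer `i` observed price `1` for
product `i` and `2` for the others and purchased product `i`, each candidate
price vector `P k` yields total worst-case revenue exactly `1`, while the
all-ones price vector yields `n`; the ratio `1/n` tends to `0`. -/
theorem stmt_13 (n : ℕ) [NeZero n] :
    (∀ k : Fin n, ∑ i,
        grev (fun j => if i = j then (1 : ℝ) else 2)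
          (fun j => if k = j then (1 : ℝ) else 2) i = 1) ∧
    (∑ i : Fin n,
        grev (fun j => if i = j then (1 : ℝ) else 2) (fun _ => (1 : ℝ)) i
      = (n : ℝ)) ∧
    Filter.Tendsto (fun n : ℕ => 1 / (n : ℝ)) Filter.atTop (nhds 0) :=
  stmt_13_general n
end

section
/- Given historical prices P with choice c and new prices p ≥ 0 with f(p) > 0 (where f is the single-customer worst-case revenue), let P_max ≥ max_j P_j be a bound. Then there exists a price vector p' with p'_j < P_max for all j such that f(p') ≥ f(p); i.e., pricing any product at or above the maximum historical purchase price never increases worst-case revenue. -/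
/-! Capping every price at `p c` keeps the choice `c` at the same price, and any product that
becomes feasible by the cap is now priced at `p c`, which already bounds the old minimum. -/

/-- The worst-case revenue from a customer with historical prices `P` and choice
`c` under new prices `p`: zero if the no-purchase option is feasible
(`p c ≥ P c`), else the minimum price among feasible products
(`p j - p c ≤ P j - P c`, a set containing `c`). -/
noncomputable def wrevF {n : ℕ} (P p : Fin n → ℝ) (c : Fin n) : ℝ :=
  if p c < P c then
    (Finset.univ.filter fun j => p j - p c ≤ P j - P c).inf' ⟨c, by simp⟩ p
  else 0

section

variable {n : ℕ} {P p : Fin n → ℝ} {c : Fin n}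

lemma lt_of_wrevF_ne_zero (h : wrevF P p c ≠ 0) : p c < P c := by
  by_contra hc
  exact h (if_neg hc)

lemma le_wrevF_iff_of_lt (hc : p c < P c) {a : ℝ} :
    a ≤ wrevF P p c ↔ ∀ j, p j - p c ≤ P j - P c → a ≤ p j := by
  simp [wrevF, if_pos hc, Finset.le_inf'_iff]

lemma wrevF_le_of_feasible (hc : p c < P c) {j : Fin n} (hj : p j - p c ≤ P j - P c) :
    wrevF P p c ≤ p j :=
  (le_wrevF_iff_of_lt hc).1 le_rfl j hj

theorem wrevF_le_wrevF_min_self (hc : p c < P c) :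
    wrevF P p c ≤ wrevF P (fun j => min (p j) (p c)) c := by
  have hc' : min (p c) (p c) < P c := by rwa [min_self]
  refine (le_wrevF_iff_of_lt hc').2 fun j hj => ?_
  simp only [min_self] at hj ⊢
  rcases le_total (p j) (p c) with hjc | hcj
  · rw [min_eq_left hjc] at hj ⊢
    exact wrevF_le_of_feasible hc hj
  · rw [min_eq_right hcj]
    exact wrevF_le_of_feasible hc (by simp)

end

theorem stmt_15_general (n : ℕ) (P p : Fin n → ℝ) (c : Fin n)
    (hp : ∀ j, 0 ≤ p j)
    (Pmax : ℝ) (hPmax : ∀ j, P j ≤ Pmax)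
    (hf : 0 < wrevF P p c) :
    ∃ p' : Fin n → ℝ, (∀ j, 0 ≤ p' j) ∧ (∀ j, p' j < Pmax) ∧
      wrevF P p c ≤ wrevF P p' c := by
  have hc : p c < P c := lt_of_wrevF_ne_zero hf.ne'
  exact ⟨fun j => min (p j) (p c), fun j => le_min (hp j) (hp c),
    fun j => (min_le_right _ _).trans_lt (hc.trans_le (hPmax c)),
    wrevF_le_wrevF_min_self hc⟩

/-- If the worst-case revenue `f(p)` is positive and `Pmax`
bounds all historical prices, then there are prices `p'` with every `p' j <
Pmax` and `f(p') ≥ f(p)`: pricing any product at or above the maximum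
historical purchase price never increases worst-case revenue. -/
theorem stmt_15 (n : ℕ) (P p : Fin n → ℝ) (c : Fin n)
    (hP : ∀ j, 0 < P j) (hp : ∀ j, 0 ≤ p j)
    (Pmax : ℝ) (hPmax : ∀ j, P j ≤ Pmax)
    (hf : 0 < wrevF P p c) :
    ∃ p' : Fin n → ℝ, (∀ j, 0 ≤ p' j) ∧ (∀ j, p' j < Pmax) ∧
      wrevF P p c ≤ wrevF P p' c :=
  stmt_15_general n P p c hp Pmax hPmax hf
end

section
/- Let p⁰ > 0 be sorted prices 0 < p⁰_1 ≤ ... ≤ p⁰_n achieving the relaxed optimum g(0) of the pricing problem (with non-strict indicator constraints), with associated purchase assignment y⁰. For any δ' > 0 small enough that p' > 0, define p'_j = p⁰_j − j·δ'/(m n). Then the true worst-case total revenue satisfies ∑_{i=1}^m f_i(p') ≥ g(0) − δ', where f_i is customer i's worst-case revenue under strict no-purchase conditions. -/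
open Finset

section RankShift

variable {n : ℕ} (P : Fin n → ℝ) {p d : Fin n → ℝ}

theorem wrevF_nonneg (hp : ∀ j, 0 ≤ p j) (c : Fin n) : 0 ≤ wrevF P p c := by
  unfold wrevF
  split_ifs
  · exact le_inf' _ _ fun j _ => hp j
  · exact le_rfl

theorem sub_lt_or_le_of_sub_shift_le (hd : StrictMono d) {c j : Fin n}
    (hj : (p j - d j) - (p c - d c) ≤ P j - P c) :
    p j - p c < P j - P c ∨ c ≤ j := by
  by_contra! h
  linarith [hd h.2]

theorem grev_sub_le_wrevF_sub {c : Fin n} {ε : ℝ} (hp : Monotone p) (hd : StrictMono d)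
    (hd_pos : ∀ j, 0 < d j) (hd_le : ∀ j, d j ≤ ε) (hpd : ∀ j, 0 ≤ p j - d j) :
    grev P p c - ε ≤ wrevF P (fun j => p j - d j) c := by
  by_cases hbuy : p c ≤ P c
  · have hbuy' : p c - d c < P c := by linarith [hd_pos c]
    rw [grev, if_pos hbuy, wrevF, if_pos hbuy']
    refine le_inf' _ _ fun j hj => ?_
    have hle :
        (univ.filter fun j => j = c ∨ p j - p c < P j - P c).inf' ⟨c, by simp⟩ p ≤ p j := by
      rcases sub_lt_or_le_of_sub_shift_le P hd (mem_filter.mp hj).2 with hlt | hcj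
      · exact inf'_le _ (by simp [hlt])
      · exact (inf'_le _ (by simp)).trans (hp hcj)
    linarith [hd_le j]
  · rw [grev, if_neg hbuy, zero_sub]
    linarith [wrevF_nonneg P hpd c, hd_pos c, hd_le c]

end RankShift

theorem stmt_16_general (m n : ℕ) (hm : 0 < m)
    (P : Fin m → Fin n → ℝ) (c : Fin m → Fin n)
    (p0 : Fin n → ℝ) (hsorted : Monotone p0)
    (δ' : ℝ) (hδ : 0 < δ')
    (p' : Fin n → ℝ)
    (hp'def : ∀ j : Fin n, p' j = p0 j - ((j.1 : ℝ) + 1) * δ' / (m * n))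
    (hp'pos : ∀ j, 0 < p' j) :
    (∑ i, grev (P i) p0 (c i)) - δ' ≤ ∑ i, wrevF (P i) p' (c i) := by
  have hm' : (m : ℝ) ≠ 0 := Nat.cast_ne_zero.mpr hm.ne'
  set d : Fin n → ℝ := fun j => ((j : ℝ) + 1) * (δ' / (m * n))
  have hp' : p' = fun j => p0 j - d j := funext fun j => by rw [hp'def, mul_div_assoc]
  have hn (j : Fin n) : (0 : ℝ) < n := Nat.cast_pos.mpr j.pos
  have hstep (j : Fin n) : 0 < δ' / (m * n) := by have := hn j; positivity
  have hd_pos (j : Fin n) : 0 < d j := mul_pos (by positivity) (hstep j)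
  have hd : StrictMono d := fun j k hjk => mul_lt_mul_of_pos_right (by simpa using hjk) (hstep j)
  have hd_le (j : Fin n) : d j ≤ δ' / m := by
    have hjn : (j : ℝ) + 1 ≤ n := by exact_mod_cast j.2
    calc d j ≤ n * (δ' / (m * n)) := mul_le_mul_of_nonneg_right hjn (hstep j).le
      _ = δ' / m := by field_simp [(hn j).ne']
  calc (∑ i, grev (P i) p0 (c i)) - δ' = ∑ i, (grev (P i) p0 (c i) - δ' / m) := by
        rw [sum_sub_distrib, sum_const, card_univ, Fintype.card_fin, nsmul_eq_mul]
        field_simp [hm']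
    _ ≤ ∑ i, wrevF (P i) p' (c i) := sum_le_sum fun i _ => by
        rw [hp']
        exact grev_sub_le_wrevF_sub (P i) hsorted hd hd_pos hd_le
          fun j => (congrFun hp' j ▸ hp'pos j).le

/-- Let `p0 > 0` be sorted prices attaining the relaxed optimum
`g(0) = ∑ i, grev (P i) p0 (c i)` of the pricing problem, and for small
`δ' > 0` define `p' j = p0 j - (j + 1) * δ' / (m * n)` (1-based rank `j + 1`),
with `p' > 0`. Then the true worst-case total revenue (strict no-purchase
conditions) satisfies `∑ i, f i p' ≥ g(0) - δ'`. -/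
theorem stmt_16 (m n : ℕ) (hm : 0 < m) (hn : 0 < n)
    (P : Fin m → Fin n → ℝ) (c : Fin m → Fin n)
    (hP : ∀ i j, 0 < P i j)
    (p0 : Fin n → ℝ) (hp0pos : ∀ j, 0 < p0 j) (hsorted : Monotone p0)
    (hopt : ∀ p : Fin n → ℝ, (∀ j, 0 ≤ p j) →
      ∑ i, grev (P i) p (c i) ≤ ∑ i, grev (P i) p0 (c i))
    (δ' : ℝ) (hδ : 0 < δ')
    (p' : Fin n → ℝ)
    (hp'def : ∀ j : Fin n, p' j = p0 j - ((j.1 : ℝ) + 1) * δ' / (m * n))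
    (hp'pos : ∀ j, 0 < p' j) :
    (∑ i, grev (P i) p0 (c i)) - δ' ≤ ∑ i, wrevF (P i) p' (c i) :=
  stmt_16_general m n hm P c p0 hsorted δ' hδ p' hp'def hp'pos
end

section
/- For large enough m and k ≤ m, the ratio m / (∑_{i=k+1}^{m} 1/i + 1) converges to 1/(1 + log(m/k)) in the sense that ∑_{i=k+1}^m 1/i − log(m/k) → 0 as k, m → ∞ with m/k fixed; consequently, the performance guarantee 1/(1 + log(P̄/P̲)) for cut-off pricing is asymptotically tight. -/
open Filter Finset Real Topology

lemma sum_Ioc_one_div_eq_harmonic_sub {a b : ℕ} (hab : a ≤ b) :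
    ∑ i ∈ Ioc a b, (1 : ℝ) / i = harmonic b - harmonic a := by
  have harmonic_eq_sum_Ioc (n : ℕ) : (harmonic n : ℝ) = ∑ i ∈ Ioc 0 n, (1 : ℝ) / i := by
    simp [harmonic_eq_sum_Icc, ← Icc_add_one_left_eq_Ioc]
  rw [harmonic_eq_sum_Ioc, harmonic_eq_sum_Ioc, ← sum_Ioc_consecutive _ a.zero_le hab,
    add_sub_cancel_left]

/-- Both harmonic numbers are `log + γ + o(1)`, and the constants `γ` cancel. -/
theorem tendsto_sum_Ioc_one_div_sub_log {α : Type*} {l : Filter α} {a b : α → ℕ}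
    (ha : Tendsto a l atTop) (hb : Tendsto b l atTop) (hab : ∀ᶠ x in l, a x ≤ b x) :
    Tendsto (fun x ↦ ∑ i ∈ Ioc (a x) (b x), (1 : ℝ) / i - log (b x / a x)) l (𝓝 0) := by
  have hlim := (tendsto_harmonic_sub_log.comp hb).sub (tendsto_harmonic_sub_log.comp ha)
  rw [sub_self] at hlim
  refine hlim.congr' ?_
  filter_upwards [hab, ha.eventually_gt_atTop 0, hb.eventually_gt_atTop 0] with x hle ha₀ hb₀
  rw [Function.comp_apply, Function.comp_apply, sum_Ioc_one_div_eq_harmonic_sub hle,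
    log_div (by positivity) (by positivity)]
  ring

/-- With the ratio `m / k = r` fixed,
`∑_{i = k+1}^{r k} 1 / i - log (r k / k) → 0` as `k → ∞`; this is the harmonic
estimate behind the asymptotic tightness of the `1 / (1 + log (Pmax/Pmin))`
guarantee for cut-off pricing. -/
theorem stmt_19 (r : ℕ) (hr : 1 ≤ r) :
    Filter.Tendsto
      (fun k : ℕ => (∑ i ∈ Finset.Ioc k (r * k), (1 : ℝ) / i) -
        Real.log ((r * k : ℝ) / k))
      Filter.atTop (nhds 0) := by
  have hrk : Tendsto (fun k : ℕ ↦ r * k) atTop atTop :=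
    tendsto_id.const_mul_atTop' hr
  simpa using tendsto_sum_Ioc_one_div_sub_log tendsto_id hrk
    (Eventually.of_forall fun k ↦ Nat.le_mul_of_pos_left k hr)
end
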